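/- For $p = \kappa(\Lambda) p_0$ on the forward light cone, the subspace $(\Phi_e(\Lambda) \otimes \Phi_e(\Lambda)) R_g \leq \mathbb{C}^4 \otimes \mathbb{C}^4 \cong M_4(\mathbb{C})$, where $R_g$ is spanned by $p_0 \otimes p_0$, $p_0 \otimes \epsilon_\pm + \epsilon_\pm \otimes p_0$, and $\epsilon_\pm \otimes \epsilon_\pm$, equals the 5-dimensional space $\{ M \in M_4(\mathbb{C}) : M^{\mu\nu} = M^{\nu\mu},\ p_\mu M^{\mu\nu} = 0 \text{ for all } \nu,\ M^\mu_{\ \mu} = 0 \}$ of symmetric, transverse, traceless complex 2-tensors. -/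

import Mathlib

/-! Tensors in `ℂ⁴ ⊗ ℂ⁴` are realized as `4×4` matrices with `(v⊗w)^{μν} = v^μ w^ν`; the Lorentz
transformation `Λ` is given by `A ∈ SL(2, ℂ)`, acting on `ℂ⁴` by `PhiM A : x ↦ (A x̃ A†)~⁻¹` and on
`ℝ⁴` by `kappaM A`.

Since `det x̃` is the Minkowski square of `x` and `det A = 1`, the matrix `L` of `PhiM A` satisfies
`Lᵀ η L = η`. Hence the congruence `M ↦ L M Lᵀ`, which is `Φ_e(Λ) ⊗ Φ_e(Λ)`, carries the
symmetric tensors that are traceless and transverse to `q` onto those transverse to `L q`, and it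
carries the generators of `R_g` at `p₀` to those at `p = L p₀`. This reduces the theorem to
`p = p₀`, where a symmetric, transverse, traceless tensor is written out explicitly in the five
generators. -/

open Matrix Complex

noncomputable section

def tildeC (x : Fin 4 → ℂ) : Matrix (Fin 2) (Fin 2) ℂ :=
  !![x 0 + x 3, x 1 - Complex.I * x 2; x 1 + Complex.I * x 2, x 0 - x 3]

def untildeC (M : Matrix (Fin 2) (Fin 2) ℂ) : Fin 4 → ℂ :=
  ![(M 0 0 + M 1 1) / 2, (M 1 0 + M 0 1) / 2,
    (M 1 0 - M 0 1) / (2 * Complex.I), (M 0 0 - M 1 1) / 2]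

def PhiM (A : Matrix (Fin 2) (Fin 2) ℂ) (x : Fin 4 → ℂ) : Fin 4 → ℂ :=
  untildeC (A * tildeC x * Aᴴ)

def kappaM (A : Matrix (Fin 2) (Fin 2) ℂ) (x : Fin 4 → ℝ) : Fin 4 → ℝ :=
  fun i => (PhiM A (fun j => (x j : ℂ)) i).re

def epsP : Fin 4 → ℂ := ![0, 1 / (Real.sqrt 2 : ℂ), Complex.I / (Real.sqrt 2 : ℂ), 0]
def epsM : Fin 4 → ℂ := ![0, 1 / (Real.sqrt 2 : ℂ), -Complex.I / (Real.sqrt 2 : ℂ), 0]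
def p0C : Fin 4 → ℂ := ![1, 0, 0, 1]
def p0R : Fin 4 → ℝ := ![1, 0, 0, 1]

namespace Matrix

variable {n R : Type*} [Fintype n] [CommRing R]

def congrLinearMap (L : Matrix n n R) : Matrix n n R →ₗ[R] Matrix n n R where
  toFun M := L * M * Lᵀ
  map_add' M N := by rw [Matrix.mul_add, Matrix.add_mul]
  map_smul' c M := by rw [Matrix.mul_smul, Matrix.smul_mul, RingHom.id_apply]

lemma congrLinearMap_apply (L M : Matrix n n R) : congrLinearMap L M = L * M * Lᵀ := rfl

lemma congrLinearMap_vecMulVec (L : Matrix n n R) (v w : n → R) :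
    congrLinearMap L (vecMulVec v w) = vecMulVec (L *ᵥ v) (L *ᵥ w) := by
  rw [congrLinearMap_apply, mul_vecMulVec, vecMulVec_mul, vecMul_transpose]

lemma IsSymm.dotProduct_mulVec_comm {G : Matrix n n R} (hG : G.IsSymm) (v w : n → R) :
    w ⬝ᵥ G *ᵥ v = v ⬝ᵥ G *ᵥ w := by
  conv_lhs => rw [← hG.eq]
  rw [mulVec_transpose, dotProduct_comm, ← dotProduct_mulVec]

lemma transpose_nonsing_inv_mul_transpose [DecidableEq n] {L : Matrix n n R}
    (hL : IsUnit L.det) : L⁻¹ᵀ * Lᵀ = 1 := by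
  rw [← transpose_mul, mul_nonsing_inv _ hL, transpose_one]

lemma transpose_nonsing_inv_mul_mul_eq [DecidableEq n] {G L : Matrix n n R}
    (hL : Lᵀ * G * L = G) (hLu : IsUnit L.det) : L⁻¹ᵀ * G * L⁻¹ = G :=
  calc L⁻¹ᵀ * G * L⁻¹ = L⁻¹ᵀ * (Lᵀ * G * L) * L⁻¹ := by rw [hL]
    _ = (L⁻¹ᵀ * Lᵀ) * G * (L * L⁻¹) := by simp only [Matrix.mul_assoc]
    _ = G := by
      rw [transpose_nonsing_inv_mul_transpose hLu, mul_nonsing_inv _ hLu, Matrix.one_mul,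
        Matrix.mul_one]

lemma isUnit_det_of_transpose_mul_mul_eq [DecidableEq n] {G L : Matrix n n R}
    (hG : IsUnit G.det) (hL : Lᵀ * G * L = G) : IsUnit L.det := by
  have h := congrArg det hL
  rw [det_mul, det_mul, det_transpose, mul_right_comm] at h
  exact IsUnit.of_mul_eq_one _ (hG.mul_right_cancel (h.trans (one_mul _).symm))

lemma dotProduct_mulVec_map_of_map_self {K : Type*} [Field K] [NeZero (2 : K)]
    {G : Matrix n n K} (hG : G.IsSymm) (f : (n → K) →ₗ[K] n → K)
    (hf : ∀ x, f x ⬝ᵥ G *ᵥ f x = x ⬝ᵥ G *ᵥ x) (x y : n → K) :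
    f x ⬝ᵥ G *ᵥ f y = x ⬝ᵥ G *ᵥ y := by
  have hxy := hf (x + y)
  simp only [map_add, mulVec_add, add_dotProduct, dotProduct_add, hG.dotProduct_mulVec_comm (f x),
    hG.dotProduct_mulVec_comm x] at hxy
  refine mul_left_cancel₀ (two_ne_zero (α := K)) ?_
  linear_combination hxy - hf x - hf y

lemma transpose_toMatrix'_mul_mul_eq {K : Type*} [Field K] [NeZero (2 : K)] [DecidableEq n]
    {G : Matrix n n K} (hG : G.IsSymm) (f : (n → K) →ₗ[K] n → K)
    (hf : ∀ x, f x ⬝ᵥ G *ᵥ f x = x ⬝ᵥ G *ᵥ x) :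
    (LinearMap.toMatrix' f)ᵀ * G * LinearMap.toMatrix' f = G := by
  have hcompl : (toLinearMap₂' K G : (n → K) →ₗ[K] (n → K) →ₗ[K] K).compl₁₂ f f =
      toLinearMap₂' K G := LinearMap.ext₂ fun x y => by
    simp only [LinearMap.compl₁₂_apply, toLinearMap₂'_apply',
      dotProduct_mulVec_map_of_map_self hG f hf]
  rw [← LinearMap.toMatrix'_toLinearMap₂' (R := K) (S₁ := K) (S₂ := K) G,
    ← LinearMap.toMatrix₂'_compl₁₂, hcompl]

end Matrix

section TransverseTraceless

variable {n R : Type*} [Fintype n] [CommRing R]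

def symmetricTransverseTraceless (G : Matrix n n R) (q : n → R) :
    Submodule R (Matrix n n R) where
  carrier := {M | Mᵀ = M ∧ (q ᵥ* G) ᵥ* M = 0 ∧ (G * M).trace = 0}
  add_mem' := by
    rintro M N ⟨hM, hqM, htM⟩ ⟨hN, hqN, htN⟩
    exact ⟨by rw [transpose_add, hM, hN], by rw [vecMul_add, hqM, hqN, add_zero],
      by rw [Matrix.mul_add, trace_add, htM, htN, add_zero]⟩
  zero_mem' := by simp
  smul_mem' := by
    rintro c M ⟨hM, hqM, htM⟩
    exact ⟨by rw [transpose_smul, hM], by rw [vecMul_smul, hqM, smul_zero],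
      by rw [Matrix.mul_smul, trace_smul, htM, smul_zero]⟩

lemma mem_symmetricTransverseTraceless {G M : Matrix n n R} {q : n → R} :
    M ∈ symmetricTransverseTraceless G q ↔ Mᵀ = M ∧ (q ᵥ* G) ᵥ* M = 0 ∧ (G * M).trace = 0 :=
  Iff.rfl

lemma vecMulVec_self_mem_symmetricTransverseTraceless {G : Matrix n n R} {q v : n → R}
    (hqv : q ⬝ᵥ G *ᵥ v = 0) (hv : v ⬝ᵥ G *ᵥ v = 0) :
    vecMulVec v v ∈ symmetricTransverseTraceless G q :=
  ⟨transpose_vecMulVec v v, by rw [vecMul_vecMulVec, ← dotProduct_mulVec, hqv, zero_smul],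
    by rw [mul_vecMulVec, trace_vecMulVec, dotProduct_comm, hv]⟩

lemma vecMulVec_add_vecMulVec_mem_symmetricTransverseTraceless {G : Matrix n n R}
    (hG : G.IsSymm) {q v w : n → R} (hqv : q ⬝ᵥ G *ᵥ v = 0) (hqw : q ⬝ᵥ G *ᵥ w = 0)
    (hvw : v ⬝ᵥ G *ᵥ w = 0) :
    vecMulVec v w + vecMulVec w v ∈ symmetricTransverseTraceless G q := by
  refine ⟨by rw [transpose_add, transpose_vecMulVec, transpose_vecMulVec, add_comm], ?_, ?_⟩
  · rw [vecMul_add, vecMul_vecMulVec, vecMul_vecMulVec, ← dotProduct_mulVec, ← dotProduct_mulVec,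
      hqv, hqw, zero_smul, zero_smul, add_zero]
  · rw [Matrix.mul_add, trace_add, mul_vecMulVec, mul_vecMulVec, trace_vecMulVec,
      trace_vecMulVec, dotProduct_comm (G *ᵥ v), dotProduct_comm (G *ᵥ w),
      hG.dotProduct_mulVec_comm v w, hvw, add_zero]

lemma congr_mem_symmetricTransverseTraceless {G L M : Matrix n n R} {q : n → R}
    (hL : Lᵀ * G * L = G) (hM : M ∈ symmetricTransverseTraceless G q) :
    L * M * Lᵀ ∈ symmetricTransverseTraceless G (L *ᵥ q) := by
  obtain ⟨hsymm, htrans, htrace⟩ := hM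
  refine ⟨by rw [transpose_mul, transpose_mul, transpose_transpose, hsymm, Matrix.mul_assoc],
    ?_, ?_⟩
  · rw [← vecMul_transpose, vecMul_vecMul, vecMul_vecMul, ← Matrix.mul_assoc, ← Matrix.mul_assoc,
      ← Matrix.mul_assoc, hL, ← vecMul_vecMul, ← vecMul_vecMul, htrans, zero_vecMul]
  · rw [← Matrix.mul_assoc, Matrix.trace_mul_comm, ← Matrix.mul_assoc, ← Matrix.mul_assoc, hL,
      htrace]

lemma map_congrLinearMap_symmetricTransverseTraceless [DecidableEq n] {G L : Matrix n n R}
    (q : n → R) (hL : Lᵀ * G * L = G) (hLu : IsUnit L.det) :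
    (symmetricTransverseTraceless G q).map (congrLinearMap L) =
      symmetricTransverseTraceless G (L *ᵥ q) := by
  refine le_antisymm (Submodule.map_le_iff_le_comap.2 fun M hM =>
    congr_mem_symmetricTransverseTraceless hL hM) fun M hM => ⟨L⁻¹ * M * L⁻¹ᵀ, ?_, ?_⟩
  · simpa [mulVec_mulVec, hLu] using
      congr_mem_symmetricTransverseTraceless (transpose_nonsing_inv_mul_mul_eq hL hLu) hM
  · calc L * (L⁻¹ * M * L⁻¹ᵀ) * Lᵀ = (L * L⁻¹) * M * (L⁻¹ᵀ * Lᵀ) := by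
          simp only [Matrix.mul_assoc]
      _ = M := by
        rw [mul_nonsing_inv _ hLu, transpose_nonsing_inv_mul_transpose hLu, Matrix.one_mul,
          Matrix.mul_one]

def gravitonGenerators (p εp εm : n → R) : Set (Matrix n n R) :=
  {vecMulVec p p, vecMulVec p εp + vecMulVec εp p, vecMulVec p εm + vecMulVec εm p,
    vecMulVec εp εp, vecMulVec εm εm}

lemma image_congrLinearMap_gravitonGenerators (L : Matrix n n R) (p εp εm : n → R) :
    congrLinearMap L '' gravitonGenerators p εp εm =
      gravitonGenerators (L *ᵥ p) (L *ᵥ εp) (L *ᵥ εm) := by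
  simp only [gravitonGenerators, Set.image_insert_eq, Set.image_singleton, map_add,
    congrLinearMap_vecMulVec]

lemma span_gravitonGenerators_le {G : Matrix n n R} (hG : G.IsSymm) {p εp εm : n → R}
    (hp : p ⬝ᵥ G *ᵥ p = 0) (hpεp : p ⬝ᵥ G *ᵥ εp = 0) (hpεm : p ⬝ᵥ G *ᵥ εm = 0)
    (hεp : εp ⬝ᵥ G *ᵥ εp = 0) (hεm : εm ⬝ᵥ G *ᵥ εm = 0) :
    Submodule.span R (gravitonGenerators p εp εm) ≤ symmetricTransverseTraceless G p := by
  simp only [Submodule.span_le, gravitonGenerators, Set.insert_subset_iff,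
    Set.singleton_subset_iff, SetLike.mem_coe]
  exact ⟨vecMulVec_self_mem_symmetricTransverseTraceless hp hp,
    vecMulVec_add_vecMulVec_mem_symmetricTransverseTraceless hG hp hpεp hpεp,
    vecMulVec_add_vecMulVec_mem_symmetricTransverseTraceless hG hp hpεm hpεm,
    vecMulVec_self_mem_symmetricTransverseTraceless hpεp hεp,
    vecMulVec_self_mem_symmetricTransverseTraceless hpεm hεm⟩

end TransverseTraceless

def minkowskiMetric (R : Type*) [Ring R] : Matrix (Fin 4) (Fin 4) R := diagonal ![1, -1, -1, -1]

section Minkowski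

variable {R : Type*} [CommRing R]

lemma isSymm_minkowskiMetric : (minkowskiMetric R).IsSymm := isSymm_diagonal _

lemma isUnit_det_minkowskiMetric : IsUnit (minkowskiMetric R).det := by
  simp [minkowskiMetric, Fin.prod_univ_four]

lemma dotProduct_minkowskiMetric_mulVec (x y : Fin 4 → R) :
    x ⬝ᵥ minkowskiMetric R *ᵥ y = x 0 * y 0 - x 1 * y 1 - x 2 * y 2 - x 3 * y 3 := by
  simp [minkowskiMetric, dotProduct, Fin.sum_univ_four, mulVec_diagonal]
  ring

lemma vecMul_minkowskiMetric_vecMul_apply (q : Fin 4 → R) (M : Matrix (Fin 4) (Fin 4) R)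
    (ν : Fin 4) :
    ((q ᵥ* minkowskiMetric R) ᵥ* M) ν =
      q 0 * M 0 ν - q 1 * M 1 ν - q 2 * M 2 ν - q 3 * M 3 ν := by
  simp [minkowskiMetric, vecMul, dotProduct, Fin.sum_univ_four]
  ring

lemma trace_minkowskiMetric_mul (M : Matrix (Fin 4) (Fin 4) R) :
    (minkowskiMetric R * M).trace = M 0 0 - M 1 1 - M 2 2 - M 3 3 := by
  simp [minkowskiMetric, trace, Fin.sum_univ_four]
  ring

end Minkowski

lemma tildeC_add (x y : Fin 4 → ℂ) : tildeC (x + y) = tildeC x + tildeC y := by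
  ext i j; fin_cases i <;> fin_cases j <;> simp [tildeC] <;> ring

lemma tildeC_smul (c : ℂ) (x : Fin 4 → ℂ) : tildeC (c • x) = c • tildeC x := by
  ext i j; fin_cases i <;> fin_cases j <;> simp [tildeC] <;> ring

lemma untildeC_add (M N : Matrix (Fin 2) (Fin 2) ℂ) :
    untildeC (M + N) = untildeC M + untildeC N := by
  ext i; fin_cases i <;> simp [untildeC] <;> ring

lemma untildeC_smul (c : ℂ) (M : Matrix (Fin 2) (Fin 2) ℂ) :
    untildeC (c • M) = c • untildeC M := by
  ext i; fin_cases i <;> simp [untildeC] <;> ring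

lemma tildeC_untildeC (M : Matrix (Fin 2) (Fin 2) ℂ) : tildeC (untildeC M) = M := by
  ext i j; fin_cases i <;> fin_cases j <;> simp [untildeC, tildeC] <;> field_simp <;> ring

lemma det_tildeC (x : Fin 4 → ℂ) : (tildeC x).det = x ⬝ᵥ minkowskiMetric ℂ *ᵥ x := by
  rw [dotProduct_minkowskiMetric_mulVec]
  simp only [tildeC, det_fin_two_of]
  linear_combination x 2 ^ 2 * I_sq

lemma tildeC_ofReal_isHermitian (r : Fin 4 → ℝ) : (tildeC fun j => (r j : ℂ)).IsHermitian := by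
  ext i j; fin_cases i <;> fin_cases j <;> simp [tildeC, Complex.ext_iff]

lemma conj_untildeC {H : Matrix (Fin 2) (Fin 2) ℂ} (hH : H.IsHermitian) (i : Fin 4) :
    starRingEnd ℂ (untildeC H i) = untildeC H i := by
  have h : ∀ a b, starRingEnd ℂ (H b a) = H a b := hH.apply
  fin_cases i <;> simp [untildeC, map_div₀, h, map_ofNat] <;> ring

def phiLinearMap (A : Matrix (Fin 2) (Fin 2) ℂ) : (Fin 4 → ℂ) →ₗ[ℂ] Fin 4 → ℂ where
  toFun := PhiM A
  map_add' x y := by simp only [PhiM, tildeC_add, Matrix.mul_add, Matrix.add_mul, untildeC_add]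
  map_smul' c x := by
    simp only [PhiM, tildeC_smul, Matrix.mul_smul, Matrix.smul_mul, untildeC_smul,
      RingHom.id_apply]

def lorentzMatrix (A : Matrix (Fin 2) (Fin 2) ℂ) : Matrix (Fin 4) (Fin 4) ℂ :=
  LinearMap.toMatrix' (phiLinearMap A)

lemma lorentzMatrix_mulVec (A : Matrix (Fin 2) (Fin 2) ℂ) (x : Fin 4 → ℂ) :
    lorentzMatrix A *ᵥ x = PhiM A x :=
  LinearMap.toMatrix'_mulVec _ x

lemma dotProduct_minkowskiMetric_mulVec_PhiM_self {A : Matrix (Fin 2) (Fin 2) ℂ} (hA : A.det = 1)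
    (x : Fin 4 → ℂ) :
    PhiM A x ⬝ᵥ minkowskiMetric ℂ *ᵥ PhiM A x = x ⬝ᵥ minkowskiMetric ℂ *ᵥ x := by
  rw [← det_tildeC, ← det_tildeC, PhiM, tildeC_untildeC, det_mul, det_mul, det_conjTranspose, hA,
    star_one, one_mul, mul_one]

lemma transpose_lorentzMatrix_mul_mul {A : Matrix (Fin 2) (Fin 2) ℂ} (hA : A.det = 1) :
    (lorentzMatrix A)ᵀ * minkowskiMetric ℂ * lorentzMatrix A = minkowskiMetric ℂ :=
  transpose_toMatrix'_mul_mul_eq isSymm_minkowskiMetric _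
    (dotProduct_minkowskiMetric_mulVec_PhiM_self hA)

/-- `kappaM` takes the real part, which loses nothing because `x̃` is Hermitian for real `x`. -/
lemma ofReal_kappaM (A : Matrix (Fin 2) (Fin 2) ℂ) (r : Fin 4 → ℝ) (i : Fin 4) :
    (kappaM A r i : ℂ) = PhiM A (fun j => r j) i :=
  Complex.conj_eq_iff_re.1 <|
    conj_untildeC (isHermitian_mul_mul_conjTranspose A (tildeC_ofReal_isHermitian r)) i

lemma ofReal_p0R : (fun j => (p0R j : ℂ)) = p0C := by
  ext j; fin_cases j <;> simp [p0R, p0C]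

lemma ofReal_sqrt_two_sq : ((Real.sqrt 2 : ℝ) : ℂ) ^ 2 = 2 := by
  rw [← Complex.ofReal_pow, Real.sq_sqrt zero_le_two, Complex.ofReal_ofNat]

lemma span_gravitonGenerators_p0C_le :
    Submodule.span ℂ (gravitonGenerators p0C epsP epsM) ≤
      symmetricTransverseTraceless (minkowskiMetric ℂ) p0C := by
  refine span_gravitonGenerators_le isSymm_minkowskiMetric ?_ ?_ ?_ ?_ ?_ <;>
    rw [dotProduct_minkowskiMetric_mulVec] <;> simp [p0C, epsP, epsM] <;>
    grind [ofReal_sqrt_two_sq, I_sq]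

/-- The coefficients come from `ε± = (e₁ ± i e₂) / √2`. -/
lemma eq_combination_gravitonGenerators_p0C {N : Matrix (Fin 4) (Fin 4) ℂ}
    (hN : N ∈ symmetricTransverseTraceless (minkowskiMetric ℂ) p0C) :
    N = N 0 0 • vecMulVec p0C p0C
      + ((Real.sqrt 2 : ℂ) * (N 0 1 - I * N 0 2) / 2) • (vecMulVec p0C epsP + vecMulVec epsP p0C)
      + ((Real.sqrt 2 : ℂ) * (N 0 1 + I * N 0 2) / 2) • (vecMulVec p0C epsM + vecMulVec epsM p0C)
      + (N 1 1 - I * N 1 2) • vecMulVec epsP epsP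
      + (N 1 1 + I * N 1 2) • vecMulVec epsM epsM := by
  obtain ⟨hsymm, htrans, htrace⟩ := hN
  have hs (i j : Fin 4) : N j i = N i j := congrFun₂ hsymm i j
  have ht (ν : Fin 4) : N 0 ν = N 3 ν := by
    simpa [vecMul_minkowskiMetric_vecMul_apply, p0C, sub_eq_zero] using congrFun htrans ν
  rw [trace_minkowskiMetric_mul] at htrace
  ext i j
  fin_cases i <;> fin_cases j <;> simp [p0C, epsP, epsM] <;> grind [ofReal_sqrt_two_sq, I_sq]

lemma symmetricTransverseTraceless_p0C_le_span :
    symmetricTransverseTraceless (minkowskiMetric ℂ) p0C ≤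
      Submodule.span ℂ (gravitonGenerators p0C epsP epsM) := by
  intro N hN
  rw [eq_combination_gravitonGenerators_p0C hN]
  refine add_mem (add_mem (add_mem (add_mem ?_ ?_) ?_) ?_) ?_ <;>
    exact Submodule.smul_mem _ _ (Submodule.subset_span (by simp [gravitonGenerators]))

lemma span_gravitonGenerators_p0C :
    Submodule.span ℂ (gravitonGenerators p0C epsP epsM) =
      symmetricTransverseTraceless (minkowskiMetric ℂ) p0C :=
  le_antisymm span_gravitonGenerators_p0C_le symmetricTransverseTraceless_p0C_le_span

theorem graviton_potential_fiber (A : Matrix (Fin 2) (Fin 2) ℂ)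
    (hA : A.det = 1) :
    (Submodule.span ℂ
        ({vecMulVec (PhiM A p0C) (PhiM A p0C),
          vecMulVec (PhiM A p0C) (PhiM A epsP) + vecMulVec (PhiM A epsP) (PhiM A p0C),
          vecMulVec (PhiM A p0C) (PhiM A epsM) + vecMulVec (PhiM A epsM) (PhiM A p0C),
          vecMulVec (PhiM A epsP) (PhiM A epsP),
          vecMulVec (PhiM A epsM) (PhiM A epsM)} :
          Set (Matrix (Fin 4) (Fin 4) ℂ)) : Set (Matrix (Fin 4) (Fin 4) ℂ)) =
      {M : Matrix (Fin 4) (Fin 4) ℂ |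
        Mᵀ = M ∧
        (∀ ν : Fin 4,
          ((kappaM A p0R 0 : ℝ) : ℂ) * M 0 ν - ((kappaM A p0R 1 : ℝ) : ℂ) * M 1 ν -
            ((kappaM A p0R 2 : ℝ) : ℂ) * M 2 ν - ((kappaM A p0R 3 : ℝ) : ℂ) * M 3 ν = 0) ∧
        M 0 0 - M 1 1 - M 2 2 - M 3 3 = 0} := by
  have hL := transpose_lorentzMatrix_mul_mul hA
  have hspan : Submodule.span ℂ (gravitonGenerators (PhiM A p0C) (PhiM A epsP) (PhiM A epsM)) =
      symmetricTransverseTraceless (minkowskiMetric ℂ) (PhiM A p0C) := by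
    rw [← lorentzMatrix_mulVec, ← lorentzMatrix_mulVec, ← lorentzMatrix_mulVec,
      ← image_congrLinearMap_gravitonGenerators, ← Submodule.map_span,
      span_gravitonGenerators_p0C,
      map_congrLinearMap_symmetricTransverseTraceless _ hL
        (isUnit_det_of_transpose_mul_mul_eq isUnit_det_minkowskiMetric hL)]
  ext M
  rw [← gravitonGenerators, hspan, SetLike.mem_coe, mem_symmetricTransverseTraceless,
    funext_iff, trace_minkowskiMetric_mul]
  simp only [vecMul_minkowskiMetric_vecMul_apply, ofReal_kappaM, ofReal_p0R, Pi.zero_apply,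
    Set.mem_ofPred_eq]
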